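/- arXiv:1202.1336 — 5 statements merged into one kernel-verified Lean document; each statement's English description precedes it below -/
import Mathlib

section
/- Let C be a subspace of S1 × A × S2. Then C contains no nonzero element of the form (s1,0,0) or (0,0,s2) if and only if both projections of C^⊥ onto S1* and onto S2* are surjective. (Properness of a constraint code is equivalent to trimness of its dual.) -/
open Module

/-- The orthogonal complement of a constraint code `C ⊆ S1 × A × S2`, taken inside
`S1* × A* × S2*` with respect to the pairing
`⟨(s1,a,s2),(σ1,α,σ2)⟩ = σ1(s1) + α(a) + σ2(s2)`. -/
def constraintPerp {F S1 A S2 : Type*} [Field F]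
    [AddCommGroup S1] [Module F S1] [AddCommGroup A] [Module F A]
    [AddCommGroup S2] [Module F S2] (C : Submodule F (S1 × A × S2)) :
    Submodule F (Dual F S1 × Dual F A × Dual F S2) where
  carrier := {d | ∀ x ∈ C, d.1 x.1 + d.2.1 x.2.1 + d.2.2 x.2.2 = 0}
  zero_mem' := by intro x hx; simp
  add_mem' := by
    intro a b ha hb x hx
    have h1 := ha x hx
    have h2 := hb x hx
    simp only [Prod.fst_add, Prod.snd_add, LinearMap.add_apply]
    linear_combination h1 + h2
  smul_mem' := by
    intro r a ha x hx
    have h1 := ha x hx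
    simp only [Prod.smul_fst, Prod.smul_snd, LinearMap.smul_apply, smul_eq_mul]
    linear_combination r * h1

/-!
Both directions come from viewing `C^⊥` as the annihilator of `C` in `(S1 × A × S2)*`. If `C`
meets `S1 × 0 × 0` trivially, then `S1` embeds into `(S1 × A × S2) / C`, so every functional on
`S1` extends to the quotient, i.e. to a functional vanishing on `C`. Conversely, if `(u, 0, 0) ∈ C`,
every `f ∈ S1*` is the first component of some element of `C^⊥` and hence kills `u`, so `u = 0`.
-/

theorem Submodule.exists_mem_dualAnnihilator_comp_eq {K M N : Type*} [Field K]
    [AddCommGroup M] [Module K M] [AddCommGroup N] [Module K N]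
    (C : Submodule K M) {i : N →ₗ[K] M} (hi : ∀ u, i u ∈ C → u = 0) (f : Dual K N) :
    ∃ φ ∈ C.dualAnnihilator, φ ∘ₗ i = f := by
  have hinj : LinearMap.ker (C.mkQ ∘ₗ i) = ⊥ :=
    LinearMap.ker_eq_bot'.2 fun u hu => hi u ((Submodule.Quotient.mk_eq_zero C).1 hu)
  obtain ⟨g, hg⟩ := (C.mkQ ∘ₗ i).exists_leftInverse_of_injective hinj
  refine ⟨f ∘ₗ g ∘ₗ C.mkQ, (Submodule.mem_dualAnnihilator _).2 fun x hx => ?_, ?_⟩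
  · simp [(Submodule.Quotient.mk_eq_zero C).2 hx]
  · rw [LinearMap.comp_assoc, LinearMap.comp_assoc, hg, LinearMap.comp_id]

theorem mem_constraintPerp_of_mem_dualAnnihilator {F S1 A S2 : Type*} [Field F]
    [AddCommGroup S1] [Module F S1] [AddCommGroup A] [Module F A]
    [AddCommGroup S2] [Module F S2] {C : Submodule F (S1 × A × S2)}
    {φ : Dual F (S1 × A × S2)} (hφ : φ ∈ C.dualAnnihilator) :
    (φ ∘ₗ LinearMap.inl F S1 (A × S2),
      φ ∘ₗ LinearMap.inr F S1 (A × S2) ∘ₗ LinearMap.inl F A S2,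
      φ ∘ₗ LinearMap.inr F S1 (A × S2) ∘ₗ LinearMap.inr F A S2) ∈ constraintPerp C := by
  intro x hx
  rw [← (Submodule.mem_dualAnnihilator _).1 hφ x hx]
  simp only [LinearMap.comp_apply, LinearMap.inl_apply, LinearMap.inr_apply, ← map_add]
  simp

theorem proper_iff_dual_trim_general {F S1 A S2 : Type*} [Field F]
    [AddCommGroup S1] [Module F S1] [AddCommGroup A] [Module F A]
    [AddCommGroup S2] [Module F S2]
    (C : Submodule F (S1 × A × S2)) :
    ((∀ u : S1, (u, (0 : A), (0 : S2)) ∈ C → u = 0) ∧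
      (∀ w : S2, ((0 : S1), (0 : A), w) ∈ C → w = 0)) ↔
      ((∀ f : Dual F S1, ∃ d ∈ constraintPerp C, d.1 = f) ∧
        (∀ g : Dual F S2, ∃ d ∈ constraintPerp C, d.2.2 = g)) := by
  constructor
  · rintro ⟨h1, h2⟩
    constructor
    · intro f
      obtain ⟨φ, hφ, rfl⟩ :=
        C.exists_mem_dualAnnihilator_comp_eq (i := LinearMap.inl F S1 (A × S2)) h1 f
      exact ⟨_, mem_constraintPerp_of_mem_dualAnnihilator hφ, rfl⟩
    · intro g
      obtain ⟨φ, hφ, rfl⟩ := C.exists_mem_dualAnnihilator_comp_eq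
        (i := LinearMap.inr F S1 (A × S2) ∘ₗ LinearMap.inr F A S2) h2 g
      exact ⟨_, mem_constraintPerp_of_mem_dualAnnihilator hφ, rfl⟩
  · rintro ⟨h1, h2⟩
    constructor
    · intro u hu
      refine (forall_dual_apply_eq_zero_iff F u).1 fun f => ?_
      obtain ⟨d, hd, rfl⟩ := h1 f
      simpa using hd _ hu
    · intro w hw
      refine (forall_dual_apply_eq_zero_iff F w).1 fun g => ?_
      obtain ⟨d, hd, rfl⟩ := h2 g
      simpa using hd _ hw

/-- A constraint code `C ⊆ S1 × A × S2` is proper (contains no nonzero element of the form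
`(s1,0,0)` or `(0,0,s2)`) iff its orthogonal complement `C^⊥ ⊆ S1* × A* × S2*` is trim,
i.e. both projections of `C^⊥` onto `S1*` and onto `S2*` are surjective. -/
theorem proper_iff_dual_trim {F S1 A S2 : Type*} [Field F] [Fintype F]
    [AddCommGroup S1] [Module F S1] [AddCommGroup A] [Module F A]
    [AddCommGroup S2] [Module F S2] [FiniteDimensional F S1]
    [FiniteDimensional F A] [FiniteDimensional F S2]
    (C : Submodule F (S1 × A × S2)) :
    ((∀ u : S1, (u, (0 : A), (0 : S2)) ∈ C → u = 0) ∧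
      (∀ w : S2, ((0 : S1), (0 : A), w) ∈ C → w = 0)) ↔
      ((∀ f : Dual F S1, ∃ d ∈ constraintPerp C, d.1 = f) ∧
        (∀ g : Dual F S2, ∃ d ∈ constraintPerp C, d.2.2 = g)) :=
  proper_iff_dual_trim_general C
end

section
/- Let B ⊆ A × S be the behavior of a tail-biting trellis realization of a code C (so C is the projection of B onto A). Suppose the realization is unobservable, i.e., there exists a nonzero s ∈ S with (0, s) ∈ B. Fix an index i with s_i ≠ 0 and a subspace T_i of S_i with T_i ⊕ span(s_i) = S_i. Then the projection onto A of B' = {(a, t) ∈ B : t_i ∈ T_i} still equals C. -/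
/-!
Adding multiples of the unobservable trajectory `(0, s)` to a trajectory `(a, t)` does not
change its symbols, and since `S i = Tᵢ + span (s i)`, a suitable multiple moves the state
`t i` into `Tᵢ`.
-/

open Module

/-- The behavior of a tail-biting trellis realization with state spaces `S i`, symbol
spaces `A i` (`i ∈ ℤ/m`), and constraint codes `C i ⊆ S i × A i × S (i+1)`: the subspace of
all pairs `(a, s)` of symbol/state sequences satisfying all local constraints. -/
def trellisBehavior {F : Type*} [Field F] {m : ℕ} (S A : ZMod m → Type*)
    [∀ i, AddCommGroup (S i)] [∀ i, Module F (S i)]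
    [∀ i, AddCommGroup (A i)] [∀ i, Module F (A i)]
    (C : ∀ i, Submodule F (S i × A i × S (i + 1))) :
    Submodule F ((∀ i, A i) × (∀ i, S i)) where
  carrier := {p | ∀ i, (p.2 i, p.1 i, p.2 (i + 1)) ∈ C i}
  zero_mem' := by intro i; exact (C i).zero_mem
  add_mem' := by intro p q hp hq i; exact (C i).add_mem (hp i) (hq i)
  smul_mem' := by intro r p hp i; exact (C i).smul_mem r (hp i)

theorem Submodule.exists_sub_smul_mem_of_codisjoint_span_singleton {K V : Type*} [Ring K]
    [AddCommGroup V] [Module K V] {T : Submodule K V} {v : V}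
    (h : Codisjoint T (Submodule.span K {v})) (x : V) : ∃ c : K, x - c • v ∈ T := by
  obtain ⟨u, w, hu, hw, rfl⟩ := Submodule.codisjoint_iff_exists_add_eq.mp h x
  obtain ⟨c, rfl⟩ := Submodule.mem_span_singleton.mp hw
  exact ⟨c, by simpa using hu⟩

theorem Submodule.mk_sub_smul_mem_of_mk_zero_mem {K M N : Type*} [Ring K]
    [AddCommGroup M] [Module K M] [AddCommGroup N] [Module K N] {B : Submodule K (M × N)}
    {a : M} {t s : N} (ht : (a, t) ∈ B) (hs : ((0 : M), s) ∈ B) (c : K) :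
    (a, t - c • s) ∈ B := by
  simpa using B.sub_mem ht (B.smul_mem c hs)

theorem trim_unobservable_same_code_general
    {F : Type*} [Field F] {m : ℕ}
    (S A : ZMod m → Type*)
    [∀ i, AddCommGroup (S i)] [∀ i, Module F (S i)]
    [∀ i, AddCommGroup (A i)] [∀ i, Module F (A i)]
    (C : ∀ i, Submodule F (S i × A i × S (i + 1)))
    (s : ∀ j, S j)
    (hsB : ((0 : ∀ j, A j), s) ∈ trellisBehavior S A C)
    (i : ZMod m)
    (Ti : Submodule F (S i)) (hTi : IsCompl Ti (Submodule.span F {s i})) :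
    ∀ a : ∀ j, A j,
      (∃ t, (a, t) ∈ trellisBehavior S A C ∧ t i ∈ Ti) ↔
        (∃ t, (a, t) ∈ trellisBehavior S A C) := by
  intro a
  refine ⟨fun ⟨t, ht, _⟩ => ⟨t, ht⟩, fun ⟨t, ht⟩ => ?_⟩
  obtain ⟨c, hc⟩ :=
    Submodule.exists_sub_smul_mem_of_codisjoint_span_singleton hTi.codisjoint (t i)
  exact ⟨t - c • s, Submodule.mk_sub_smul_mem_of_mk_zero_mem ht hsB c, hc⟩

/-- Suppose a tail-biting trellis realization is unobservable, witnessed by a nonzero state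
sequence `s` with `(0, s)` in the behavior `B`. Fix `i` with `s i ≠ 0` and a subspace
`Ti ⊆ S i` with `Ti ⊕ span(s i) = S i`. Then the projection onto the symbol space of the
trimmed behavior `B' = {(a, t) ∈ B : t i ∈ Ti}` still equals the code generated. -/
theorem trim_unobservable_same_code
    {F : Type*} [Field F] [Fintype F] {m : ℕ}
    (S A : ZMod m → Type*)
    [∀ i, AddCommGroup (S i)] [∀ i, Module F (S i)] [∀ i, FiniteDimensional F (S i)]
    [∀ i, AddCommGroup (A i)] [∀ i, Module F (A i)] [∀ i, FiniteDimensional F (A i)]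
    (C : ∀ i, Submodule F (S i × A i × S (i + 1)))
    (s : ∀ j, S j) (hs : s ≠ 0)
    (hsB : ((0 : ∀ j, A j), s) ∈ trellisBehavior S A C)
    (i : ZMod m) (hsi : s i ≠ 0)
    (Ti : Submodule F (S i)) (hTi : IsCompl Ti (Submodule.span F {s i})) :
    ∀ a : ∀ j, A j,
      (∃ t, (a, t) ∈ trellisBehavior S A C ∧ t i ∈ Ti) ↔
        (∃ t, (a, t) ∈ trellisBehavior S A C) :=
  trim_unobservable_same_code_general S A C s hsB i Ti hTi
end

section
/- Let T be an observable tail-biting trellis realization of a code C, i.e., for each a ∈ C there is exactly one s with (a,s) in the behavior B. Suppose there exist states s_1 ∈ S_1, ..., s_{m-1} ∈ S_{m-1}, s_0 ∈ S_0, not all zero, with (s_j, 0, s_{j+1}) ∈ C_j for j = 1, ..., m−1 (a nontrivial all-zero path of length m−1). Then the realization obtained by replacing C_0 with C_0 + span{(s_0, 0, s_1)} generates the same code C, and its behavior equals B + span{(0, s)} where s = (s_0, s_1, ..., s_{m-1}). -/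
open Module

/-- Let `T` be an observable tail-biting trellis realization (each codeword has exactly one
state trajectory). Suppose there is a nontrivial all-zero path of length `m−1` through
states `s 1, ..., s (m-1), s 0`, i.e. `s ≠ 0` and `(s j, 0, s (j+1)) ∈ C j` for all `j ≠ 0`.
Then replacing `C 0` by `C 0 + span{(s 0, 0, s 1)}` yields a realization that generates the
same code, and whose behavior equals `B + span{(0, s)}`. -/
theorem span_one_add_branch
    {F : Type*} [Field F] [Fintype F] {m : ℕ} [NeZero m] (hm : 2 ≤ m)
    (S A : ZMod m → Type*)
    [∀ i, AddCommGroup (S i)] [∀ i, Module F (S i)] [∀ i, FiniteDimensional F (S i)]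
    [∀ i, AddCommGroup (A i)] [∀ i, Module F (A i)] [∀ i, FiniteDimensional F (A i)]
    (C : ∀ i, Submodule F (S i × A i × S (i + 1)))
    (hObs : ∀ (a : ∀ j, A j) (t t' : ∀ j, S j),
      (a, t) ∈ trellisBehavior S A C → (a, t') ∈ trellisBehavior S A C → t = t')
    (s : ∀ j, S j) (hs : s ≠ 0)
    (hpath : ∀ j, j ≠ 0 → (s j, (0 : A j), s (j + 1)) ∈ C j) :
    (∀ a : ∀ j, A j,
        (∃ t, (a, t) ∈ trellisBehavior S A
            (Function.update C 0 (C 0 ⊔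
              Submodule.span F {((s 0, (0 : A 0), s (0 + 1)) : S 0 × A 0 × S (0 + 1))}))) ↔
          (∃ t, (a, t) ∈ trellisBehavior S A C)) ∧
      trellisBehavior S A
          (Function.update C 0 (C 0 ⊔
            Submodule.span F {((s 0, (0 : A 0), s (0 + 1)) : S 0 × A 0 × S (0 + 1))})) =
        trellisBehavior S A C ⊔
          Submodule.span F {(((0 : ∀ j, A j), s) : (∀ j, A j) × (∀ j, S j))} := by

  classical
  set v : S 0 × A 0 × S (0 + 1) := (s 0, (0 : A 0), s (0 + 1)) with hv
  set C' := Function.update C 0 (C 0 ⊔ Submodule.span F {v}) with hC'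
  have hsub : trellisBehavior S A C ≤ trellisBehavior S A C' := by
    intro p hp i
    by_cases hi : i = 0
    · subst hi
      rw [hC', Function.update_self]
      exact Submodule.mem_sup_left (hp 0)
    · rw [hC', Function.update_of_ne hi]; exact hp i
  have h0s : (((0 : ∀ j, A j), s) : (∀ j, A j) × (∀ j, S j)) ∈ trellisBehavior S A C' := by
    intro i
    by_cases hi : i = 0
    · subst hi
      show (s 0, (0 : A 0), s (0 + 1)) ∈ C' 0
      rw [hC', Function.update_self]
      exact Submodule.mem_sup_right (Submodule.mem_span_singleton_self v)
    · rw [hC', Function.update_of_ne hi]; exact hpath i hi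
  have hdecomp : ∀ p ∈ trellisBehavior S A C', ∃ (lam : F) (q : (∀ j, A j) × (∀ j, S j)),
      q ∈ trellisBehavior S A C ∧ p = q + lam • (((0 : ∀ j, A j), s) : (∀ j, A j) × (∀ j, S j)) := by
    intro p hp
    have h0 : (p.2 0, p.1 0, p.2 (0 + 1)) ∈ C 0 ⊔ Submodule.span F {v} := by
      have := hp 0
      rwa [hC', Function.update_self] at this
    rcases Submodule.mem_sup.1 h0 with ⟨c, hc, w, hw, hcw⟩
    rcases Submodule.mem_span_singleton.1 hw with ⟨lam, rfl⟩
    refine ⟨lam, p - lam • ((0 : ∀ j, A j), s), ?_, by abel⟩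
    have hc' : ((p.2 0, p.1 0, p.2 (0 + 1)) : S 0 × A 0 × S (0 + 1)) - lam • v ∈ C 0 := by
      rw [← hcw, add_sub_cancel_right]; exact hc
    intro i
    by_cases hi : i = 0
    · subst hi; exact hc'
    · have hpi : (p.2 i, p.1 i, p.2 (i + 1)) ∈ C i := by
        have := hp i
        rwa [hC', Function.update_of_ne hi] at this
      exact (C i).sub_mem hpi ((C i).smul_mem lam (hpath i hi))
  have heq : trellisBehavior S A C' =
      trellisBehavior S A C ⊔
        Submodule.span F {(((0 : ∀ j, A j), s) : (∀ j, A j) × (∀ j, S j))} := by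
    apply le_antisymm
    · intro p hp
      rcases hdecomp p hp with ⟨lam, q, hq, rfl⟩
      exact Submodule.add_mem _ (Submodule.mem_sup_left hq)
        (Submodule.mem_sup_right (Submodule.smul_mem _ lam (Submodule.mem_span_singleton_self _)))
    · exact sup_le hsub ((Submodule.span_singleton_le_iff_mem _ _).2 h0s)
  refine ⟨fun a => ⟨?_, ?_⟩, heq⟩
  · rintro ⟨t, ht⟩
    rcases hdecomp _ ht with ⟨lam, q, hq, hqe⟩
    have h1 : a = q.1 := by
      have := congrArg Prod.fst hqe
      simpa using this
    refine ⟨q.2, ?_⟩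
    rw [h1]
    exact hq
  · rintro ⟨t, ht⟩
    exact ⟨t, hsub ht⟩
end

section
/- Let T be an observable and controllable tail-biting trellis of length n with one-dimensional symbol spaces realizing a code C ⊆ F^n. Then T is span-one-unobservable (i.e., some constraint code C_0 can be replaced by a strictly larger subspace without changing the code realized) if and only if T contains a nontrivial path of length n−1 representing the zero word, i.e., there exist states s_1, ..., s_{n−1}, s_0, not all zero, with (s_j, 0, s_{j+1}) ∈ C_j for j = 1, ..., n−1. -/
open Module

section Aux
variable {F : Type*} [Field F] {m : ℕ} (S : ZMod m → Type*)
    [∀ i, AddCommGroup (S i)] [∀ i, Module F (S i)]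
    (C : ∀ i, Submodule F (S i × F × S (i + 1)))

lemma mem_trellisBehavior (p : (ZMod m → F) × ∀ i, S i) :
    p ∈ trellisBehavior S (fun _ => F) C ↔ ∀ i, (p.2 i, p.1 i, p.2 (i + 1)) ∈ C i :=
  Iff.rfl

def trellisMap : ((ZMod m → F) × ∀ i, S i) →ₗ[F] ∀ i, (S i × F × S (i + 1)) ⧸ C i where
  toFun p i := Submodule.Quotient.mk (p.2 i, p.1 i, p.2 (i + 1))
  map_add' p q := by
    funext i
    exact Submodule.Quotient.mk_add (C i)
      (x := (p.2 i, p.1 i, p.2 (i + 1))) (y := (q.2 i, q.1 i, q.2 (i + 1)))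
  map_smul' r p := by
    funext i
    exact Submodule.Quotient.mk_smul (C i) r (p.2 i, p.1 i, p.2 (i + 1))

@[simp] lemma trellisMap_apply (p : (ZMod m → F) × ∀ i, S i) (i : ZMod m) :
    trellisMap S C p i = Submodule.Quotient.mk (p.2 i, p.1 i, p.2 (i + 1)) := rfl

lemma trellisMap_ker :
    LinearMap.ker (trellisMap S C) = trellisBehavior S (fun _ => F) C := by
  ext p
  simp only [LinearMap.mem_ker, trellisMap, LinearMap.coe_mk, AddHom.coe_mk, funext_iff,
    Pi.zero_apply, Submodule.Quotient.mk_eq_zero]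
  rfl

lemma trellisMap_surjective [NeZero m] [∀ i, FiniteDimensional F (S i)]
    (hCtrl : (finrank F ↥(trellisBehavior S (fun _ => F) C) : ℤ) =
      ∑ i, (finrank F ↥(C i) : ℤ) - ∑ i, (finrank F (S i) : ℤ)) :
    Function.Surjective (trellisMap S C) := by
  rw [← LinearMap.range_eq_top]
  apply Submodule.eq_top_of_finrank_eq
  have hrn := LinearMap.finrank_range_add_finrank_ker (trellisMap S C)
  rw [trellisMap_ker] at hrn
  have hdom : finrank F ((ZMod m → F) × ∀ i, S i) = m + ∑ i, finrank F (S i) := by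
    rw [finrank_prod, finrank_pi, ZMod.card, finrank_pi_fintype]
  have hcod : ∀ i : ZMod m,
      (finrank F ((S i × F × S (i + 1)) ⧸ C i) : ℤ) =
        (finrank F (S i) : ℤ) + 1 + finrank F (S (i + 1)) - finrank F ↥(C i) := by
    intro i
    have h1 := Submodule.finrank_quotient_add_finrank (C i)
    have h2 : finrank F (S i × F × S (i + 1)) =
        finrank F (S i) + (1 + finrank F (S (i + 1))) := by
      rw [finrank_prod, finrank_prod, finrank_self]
    omega
  have hshift : (∑ i : ZMod m, (finrank F (S (i + 1)) : ℤ)) =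
      ∑ i, (finrank F (S i) : ℤ) :=
    Equiv.sum_comp (Equiv.addRight (1 : ZMod m)) (fun i => (finrank F (S i) : ℤ))
  have hcodsum : (finrank F (∀ i, (S i × F × S (i + 1)) ⧸ C i) : ℤ) =
      ∑ i : ZMod m, ((finrank F (S i) : ℤ) + 1 + finrank F (S (i + 1)) - finrank F ↥(C i)) := by
    rw [finrank_pi_fintype]
    push_cast
    exact Finset.sum_congr rfl fun i _ => hcod i
  have hsum : (∑ i : ZMod m, ((finrank F (S i) : ℤ) + 1 + finrank F (S (i + 1)) - finrank F ↥(C i)))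
      = ∑ i, (finrank F (S i) : ℤ) + m + ∑ i, (finrank F (S (i+1)) : ℤ) - ∑ i, (finrank F ↥(C i) : ℤ) := by
    rw [Finset.sum_sub_distrib, Finset.sum_add_distrib, Finset.sum_add_distrib]
    simp [Finset.card_univ, ZMod.card]
  have : (finrank F ↥(LinearMap.range (trellisMap S C)) : ℤ) =
      (finrank F (∀ i, (S i × F × S (i + 1)) ⧸ C i) : ℤ) := by
    rw [hcodsum, hsum, hshift]
    have : (finrank F ↥(LinearMap.range (trellisMap S C)) : ℤ)
        = (m : ℤ) + ∑ i, (finrank F (S i) : ℤ)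
          - (∑ i, (finrank F ↥(C i) : ℤ) - ∑ i, (finrank F (S i) : ℤ)) := by
      rw [← hCtrl]
      have h2 : finrank F ↥(LinearMap.range (trellisMap S C))
          + finrank F ↥(trellisBehavior S (fun _ => F) C) = m + ∑ i, finrank F (S i) := by
        rw [hrn, hdom]
      have : ((finrank F ↥(LinearMap.range (trellisMap S C)) : ℤ)
          + (finrank F ↥(trellisBehavior S (fun _ => F) C) : ℤ)) = (m : ℤ) + ∑ i, (finrank F (S i) : ℤ) := by
        exact_mod_cast h2
      linarith
    rw [this]
    ring
  exact_mod_cast this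
end Aux

/-- Let `T` be an observable and controllable tail-biting trellis of length `n` with
one-dimensional symbol spaces `Aᵢ = F`, realizing a code `C ⊆ Fⁿ`. Then `T` is
span-one-unobservable (the constraint code `C 0` can be replaced by a strictly larger
subspace without changing the code realized) iff `T` contains a nontrivial path of length
`n−1` representing the zero word: states `s` not all zero with `(s j, 0, s (j+1)) ∈ C j`
for all `j ≠ 0`. -/
theorem span_one_unobservable_iff_zero_path
    {F : Type*} [Field F] [Fintype F] {n : ℕ} [NeZero n]
    (S : ZMod n → Type*)
    [∀ i, AddCommGroup (S i)] [∀ i, Module F (S i)] [∀ i, FiniteDimensional F (S i)]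
    (C : ∀ i, Submodule F (S i × F × S (i + 1)))
    (hObs : ∀ s : ∀ j, S j,
      ((0 : ZMod n → F), s) ∈ trellisBehavior S (fun _ => F) C → s = 0)
    (hCtrl : (finrank F ↥(trellisBehavior S (fun _ => F) C) : ℤ) =
      ∑ i, (finrank F ↥(C i) : ℤ) - ∑ i, (finrank F (S i) : ℤ)) :
    (∃ D : Submodule F (S 0 × F × S (0 + 1)), C 0 < D ∧
        ∀ a : ZMod n → F,
          (∃ s, (a, s) ∈ trellisBehavior S (fun _ => F) (Function.update C 0 D)) ↔
            (∃ s, (a, s) ∈ trellisBehavior S (fun _ => F) C)) ↔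
      (∃ s : ∀ j, S j, s ≠ 0 ∧ ∀ j, j ≠ 0 → (s j, (0 : F), s (j + 1)) ∈ C j) := by
  constructor
  · rintro ⟨D, hlt, hcode⟩
    obtain ⟨d, hdD, hdC⟩ := SetLike.exists_of_lt hlt
    -- use controllability: hit the target Pi.single 0 (mk d)
    obtain ⟨p, hp⟩ := trellisMap_surjective S C hCtrl
      (Pi.single 0 (Submodule.Quotient.mk d))
    have hp0 : (p.2 0, p.1 0, p.2 (0 + 1)) - d ∈ C 0 := by
      have h0 := congrFun hp 0
      rw [Pi.single_eq_same, trellisMap_apply] at h0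
      exact (Submodule.Quotient.eq (C 0)).mp h0
    have hpj : ∀ j, j ≠ 0 → (p.2 j, p.1 j, p.2 (j + 1)) ∈ C j := by
      intro j hj
      have hj' := congrFun hp j
      rw [Pi.single_eq_of_ne hj, trellisMap_apply] at hj'
      exact (Submodule.Quotient.mk_eq_zero (C j)).mp hj'
    -- p is in the D-behavior
    have hpD : (p.1, p.2) ∈ trellisBehavior S (fun _ => F) (Function.update C 0 D) := by
      intro i
      by_cases hi : i = 0
      · subst hi
        rw [Function.update_self]
        have : (p.2 0, p.1 0, p.2 (0 + 1)) = ((p.2 0, p.1 0, p.2 (0 + 1)) - d) + d := by abel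
        rw [this]
        exact D.add_mem (hlt.le hp0) hdD
      · rw [Function.update_of_ne hi]
        exact hpj i hi
    obtain ⟨s, hs⟩ := (hcode p.1).mp ⟨p.2, hpD⟩
    refine ⟨p.2 - s, ?_, ?_⟩
    · intro h
      have hps : p.2 = s := by
        have := sub_eq_zero.mp h
        exact this
      apply hdC
      have h0 := hs 0
      rw [← hps] at h0
      have := (C 0).sub_mem h0 hp0
      simpa using this
    · intro j hj
      have := (C j).sub_mem (hpj j hj) (hs j)
      simpa using this
  · rintro ⟨s, hs0, hsC⟩
    set v : S 0 × F × S (0 + 1) := (s 0, 0, s (0 + 1)) with hv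
    have hvC : v ∉ C 0 := by
      intro hvin
      apply hs0
      apply hObs
      intro i
      by_cases hi : i = 0
      · subst hi; exact hvin
      · exact hsC i hi
    refine ⟨C 0 ⊔ Submodule.span F {v}, ?_, ?_⟩
    · refine lt_of_le_of_ne le_sup_left ?_
      intro h
      apply hvC
      have hmem : v ∈ C 0 ⊔ Submodule.span F {v} :=
        Submodule.mem_sup_right (Submodule.mem_span_singleton_self v)
      rwa [← h] at hmem
    · intro a
      constructor
      · rintro ⟨t, ht⟩
        have ht0 := ht 0
        rw [Function.update_self] at ht0
        obtain ⟨c, hc, w, hw, hcw⟩ := Submodule.mem_sup.mp ht0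
        obtain ⟨lam, hlam⟩ := Submodule.mem_span_singleton.mp hw
        refine ⟨t - lam • s, ?_⟩
        intro i
        by_cases hi : i = 0
        · subst hi
          have : ((t - lam • s) 0, a 0, (t - lam • s) (0 + 1))
              = (t 0, a 0, t (0 + 1)) - lam • v := by
            simp [hv, Prod.ext_iff]
          rw [this, hlam, ← hcw]
          simpa using hc
        · have hti := ht i
          rw [Function.update_of_ne hi] at hti
          have : ((t - lam • s) i, a i, (t - lam • s) (i + 1))
              = (t i, a i, t (i + 1)) - lam • (s i, (0:F), s (i + 1)) := by
            simp [Prod.ext_iff]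
          rw [this]
          exact (C i).sub_mem hti ((C i).smul_mem lam (hsC i hi))
      · rintro ⟨t, ht⟩
        refine ⟨t, ?_⟩
        intro i
        by_cases hi : i = 0
        · subst hi
          rw [Function.update_self]
          exact Submodule.mem_sup_left (ht 0)
        · rw [Function.update_of_ne hi]
          exact ht i
end

section
/- Let T be a tail-biting trellis realization that is state-trim, branch-trim, proper, span-two-observable and span-two-controllable, realizing a code C ⊆ F^n such that neither C nor C^⊥ contains a nonzero codeword supported on an interval of length at most 2 (cyclically). Let T' be a proper and trim realization of C differing from T only in the state space at one time, say time 1, with dim S_1' ≤ dim S_1, and in the two incident constraint codes, with dim C_0' ≤ dim C_0 and dim C_1' ≤ dim C_1. If T' is also observable, then there is a linear isomorphism ψ: S_1 → S_1' such that C_0' = {(s_0, a_0, ψ(s_1)) : (s_0, a_0, s_1) ∈ C_0} and C_1' = {(ψ(s_1), a_1, s_2) : (s_1, a_1, s_2) ∈ C_1}; in particular dim S_1' = dim S_1 and T' is isomorphic to T. -/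
/-!
Span-two observability at time `2` says that a path of `T` avoiding times `0` and `1` and carrying
the zero word vanishes away from time `1`. Hence a trajectory of `T` and a trajectory of `T'` with
the same symbols agree away from time `1`, and the relation linking the end states of branches of
`C₀` and `C₀'` with a common start state and symbol is the graph of a linear isomorphism
`ψ : S₁ ≃ S₁'`: both projections are onto by trimness, `dim S₁' ≤ dim S₁`, and only `0` is linked
to `0`. For the last point, span-two controllability completes a branch `(v, α, 0)` of `C₀'` and
the zero branch of `C₁'` to a trajectory of `T'`; its counterpart in `T` ends in `0` at time `2`
with symbol `0` at time `1`, so properness of `T` forces it through `0` at time `1`.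
Every branch of `C₀` or `C₁` lies on a trajectory of `T`, which `ψ` carries to a trajectory of
`T'`; thus `ψ` maps `C₀` into `C₀'` and `C₁` into `C₁'`, and the dimension bounds make these
inclusions equalities.
-/

open Module

/-- A valid trajectory of the realization `T'` obtained from the trellis `T` (with state
spaces `S j` and constraint codes `C j`) by replacing the state space at time `1` with `S1'`
and the two incident constraint codes with `C0'` and `C1'`: the symbol sequence is `a`, the
states are `s j` for `j ≠ 1` (the value `s 1` is irrelevant) and `t : S1'` at time `1`. -/
def trajT' {F : Type*} [Field F] {n : ℕ} (S : ZMod n → Type*)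
    [∀ i, AddCommGroup (S i)] [∀ i, Module F (S i)]
    (C : ∀ i, Submodule F (S i × F × S (i + 1)))
    (S1' : Type*) [AddCommGroup S1'] [Module F S1']
    (C0' : Submodule F (S 0 × F × S1')) (C1' : Submodule F (S1' × F × S (1 + 1)))
    (a : ZMod n → F) (s : ∀ j, S j) (t : S1') : Prop :=
  (s 0, a 0, t) ∈ C0' ∧ (t, a 1, s (1 + 1)) ∈ C1' ∧
    ∀ j, j ≠ 0 → j ≠ 1 → (s j, a j, s (j + 1)) ∈ C j

namespace Submodule

variable {K M N : Type*} [Field K] [AddCommGroup M] [Module K M] [AddCommGroup N] [Module K N]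

theorem exists_linearEquiv_of_graph [FiniteDimensional K N] (G : Submodule K (M × N))
    (hfst : ∀ m, ∃ t, (m, t) ∈ G) (hsnd : ∀ t, ∃ m, (m, t) ∈ G)
    (hfst_zero : ∀ m, (m, (0 : N)) ∈ G → m = 0) (hdim : finrank K N ≤ finrank K M) :
    ∃ ψ : M ≃ₗ[K] N, ∀ m t, (m, t) ∈ G → ψ m = t := by
  let f := (LinearMap.fst K M N).comp G.subtype
  let g := (LinearMap.snd K M N).comp G.subtype
  have hf_surj : Function.Surjective f := fun m ↦ by
    obtain ⟨t, ht⟩ := hfst m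
    exact ⟨⟨(m, t), ht⟩, rfl⟩
  have hg_bij : Function.Bijective g := by
    refine ⟨(injective_iff_map_eq_zero g).2 ?_, fun t ↦ ?_⟩
    · rintro ⟨⟨m, t⟩, h⟩ (rfl : t = 0)
      simp [hfst_zero m h]
    · obtain ⟨m, hm⟩ := hsnd t
      exact ⟨⟨(m, t), hm⟩, rfl⟩
  let eG := LinearEquiv.ofBijective g hg_bij
  have : FiniteDimensional K G := eG.symm.finiteDimensional
  have : FiniteDimensional K M := Module.Finite.of_surjective f hf_surj
  have hf_bij : Function.Bijective f := by
    refine ⟨(LinearMap.injective_iff_surjective_of_finrank_eq_finrank ?_).2 hf_surj, hf_surj⟩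
    exact le_antisymm (eG.finrank_eq.trans_le hdim)
      (LinearMap.finrank_le_finrank_of_surjective hf_surj)
  refine ⟨(LinearEquiv.ofBijective f hf_bij).symm.trans eG, fun m t h ↦ ?_⟩
  have : (LinearEquiv.ofBijective f hf_bij).symm m = ⟨(m, t), h⟩ :=
    (LinearEquiv.symm_apply_eq _).2 rfl
  simp [this, eG, g]

theorem map_equiv_eq_of_le_of_finrank_le {P Q : Type*} [AddCommGroup P] [Module K P]
    [AddCommGroup Q] [Module K Q] [FiniteDimensional K Q] (e : P ≃ₗ[K] Q)
    {p : Submodule K P} {q : Submodule K Q} (hle : p.map (e : P →ₗ[K] Q) ≤ q)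
    (hdim : finrank K q ≤ finrank K p) : p.map (e : P →ₗ[K] Q) = q :=
  eq_of_le_of_finrank_le hle (by rwa [LinearEquiv.finrank_map_eq])

end Submodule

theorem nontrivial_of_no_short_support {F ι : Type*} [Field F] [Fintype ι] (code : Set (ι → F))
    (i i' : ι) (hC : ∀ a ∈ code, (∀ j, j ≠ i → j ≠ i' → a j = 0) → a = 0)
    (hCdual : ∀ b : ι → F, (∀ a ∈ code, ∑ j, a j * b j = 0) →
      (∀ j, j ≠ i → j ≠ i' → b j = 0) → b = 0) :
    Nontrivial ι := by
  by_contra h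
  rw [not_nontrivial_iff_subsingleton] at h
  have hb := hCdual 1 (fun a ha ↦ by simp [hC a ha fun j hj _ ↦ absurd (Subsingleton.elim j i) hj])
    fun j hj _ ↦ absurd (Subsingleton.elim j i) hj
  exact one_ne_zero (congrFun hb i)

def linkingRelation {K V A M N : Type*} [Semiring K] [AddCommMonoid V] [Module K V]
    [AddCommMonoid A] [Module K A] [AddCommMonoid M] [Module K M] [AddCommMonoid N] [Module K N]
    (c : Submodule K (V × A × M)) (c' : Submodule K (V × A × N)) : Submodule K (M × N) where
  carrier := {x | ∃ v a, (v, a, x.1) ∈ c ∧ (v, a, x.2) ∈ c'}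
  zero_mem' := ⟨0, 0, c.zero_mem, c'.zero_mem⟩
  add_mem' := by
    rintro _ _ ⟨v, a, h, h'⟩ ⟨w, b, g, g'⟩
    exact ⟨v + w, a + b, c.add_mem h g, c'.add_mem h' g'⟩
  smul_mem' := by
    rintro r _ ⟨v, a, h, h'⟩
    exact ⟨r • v, r • a, c.smul_mem r h, c'.smul_mem r h'⟩

section Trellis

variable {F : Type*} [Field F] {n : ℕ} {S : ZMod n → Type*}
  [∀ i, AddCommGroup (S i)] [∀ i, Module F (S i)] {C : ∀ i, Submodule F (S i × F × S (i + 1))}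
  {S1' : Type*} [AddCommGroup S1'] [Module F S1']
  {C0' : Submodule F (S 0 × F × S1')} {C1' : Submodule F (S1' × F × S (1 + 1))}

/-- A path of length `n - 2`, from time `2` around to time `0`. -/
def IsOuterPath (C : ∀ i, Submodule F (S i × F × S (i + 1))) (a : ZMod n → F) (s : ∀ j, S j) :
    Prop :=
  ∀ j, j ≠ 0 → j ≠ 1 → (s j, a j, s (j + 1)) ∈ C j

variable (C) in
def SpanTwoObservable : Prop :=
  ∀ (i : ZMod n) (s : ∀ j, S j),
    (∀ j, j ≠ i - 2 → j ≠ i - 1 → (s j, (0 : F), s (j + 1)) ∈ C j) → ∀ j, j ≠ i - 1 → s j = 0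

variable (C) in
def SpanTwoControllable : Prop :=
  ∀ (i : ZMod n) (u : S i) (v : S (i - 2)),
    ∃ (s : ∀ j, S j) (a : ZMod n → F), s i = u ∧ s (i - 2) = v ∧
      ∀ j, j ≠ i - 2 → j ≠ i - 1 → (s j, a j, s (j + 1)) ∈ C j

theorem SpanTwoObservable.eq_zero_of_isOuterPath (hO : SpanTwoObservable C) {s : ∀ j, S j}
    (hs : IsOuterPath C 0 s) (j : ZMod n) (hj : j ≠ 1) : s j = 0 := by
  have h := hO (1 + 1) s
  rw [show (1 + 1 : ZMod n) - 2 = 0 by rw [one_add_one_eq_two, sub_self],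
    add_sub_cancel_right] at h
  exact h hs j hj

theorem SpanTwoControllable.exists_isOuterPath (hC : SpanTwoControllable C) (u : S (1 + 1))
    (v : S 0) : ∃ s a, s (1 + 1) = u ∧ s 0 = v ∧ IsOuterPath C a s := by
  have h := hC (1 + 1) u
  rw [show (1 + 1 : ZMod n) - 2 = 0 by rw [one_add_one_eq_two, sub_self],
    add_sub_cancel_right] at h
  exact h v

theorem eq_of_mem_trellisBehavior_of_trajT' (hO : SpanTwoObservable C) {a : ZMod n → F}
    {r s : ∀ j, S j} {t : S1'} (hr : (a, r) ∈ trellisBehavior S (fun _ => F) C)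
    (hs : trajT' S C S1' C0' C1' a s t) (j : ZMod n) (hj : j ≠ 1) : r j = s j :=
  sub_eq_zero.1 <| hO.eq_zero_of_isOuterPath (s := r - s)
    (fun i hi₀ hi₁ ↦ by simpa using (C i).sub_mem (hr i) (hs.2.2 i hi₀ hi₁)) j hj

section Nontrivial

variable [Nontrivial (ZMod n)]

theorem mem_linkingRelation_of_trajT' (hO : SpanTwoObservable C) {a : ZMod n → F}
    {r s : ∀ j, S j} {t : S1'} (hr : (a, r) ∈ trellisBehavior S (fun _ => F) C)
    (hs : trajT' S C S1' C0' C1' a s t) : (r (0 + 1), t) ∈ linkingRelation (C 0) C0' :=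
  ⟨r 0, a 0, hr 0, by rw [eq_of_mem_trellisBehavior_of_trajT' hO hr hs 0 zero_ne_one]; exact hs.1⟩

theorem IsOuterPath.trajT'_update {a : ZMod n → F} {s : ∀ j, S j} (hs : IsOuterPath C a s)
    {α β : F} {t : S1'} (h₀ : (s 0, α, t) ∈ C0') (h₁ : (t, β, s (1 + 1)) ∈ C1') :
    trajT' S C S1' C0' C1' (Function.update (Function.update a 0 α) 1 β) s t :=
  ⟨by simpa [Function.update_of_ne zero_ne_one] using h₀, by simpa using h₁,
    fun j hj₀ hj₁ ↦ by
      simpa [Function.update_of_ne hj₀, Function.update_of_ne hj₁] using hs j hj₀ hj₁⟩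

theorem eq_zero_of_mem_linkingRelation (hO : SpanTwoObservable C) (hC : SpanTwoControllable C)
    (hCode : ∀ a : ZMod n → F, (∃ s, (a, s) ∈ trellisBehavior S (fun _ => F) C) ↔
      ∃ s t, trajT' S C S1' C0' C1' a s t)
    (hProper₀ : ∀ v : S (0 + 1), ((0 : S 0), (0 : F), v) ∈ C 0 → v = 0)
    (hProper₁ : ∀ u : S 1, (u, (0 : F), (0 : S (1 + 1))) ∈ C 1 → u = 0)
    {m : S (0 + 1)} (hm : (m, (0 : S1')) ∈ linkingRelation (C 0) C0') : m = 0 := by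
  obtain ⟨v, α, hv, hv'⟩ := hm
  obtain ⟨s, a, hs₂, rfl, hs⟩ := hC.exists_isOuterPath 0 v
  have hT := hs.trajT'_update hv' (β := 0) (by rw [hs₂]; exact C1'.zero_mem)
  obtain ⟨r, hr⟩ := (hCode _).2 ⟨s, 0, hT⟩
  have hr₀ := eq_of_mem_trellisBehavior_of_trajT' hO hr hT 0 zero_ne_one
  have hr₂ : r (1 + 1) = 0 :=
    (eq_of_mem_trellisBehavior_of_trajT' hO hr hT _ (by simp)).trans hs₂
  have hr₁ : r 1 = 0 := hProper₁ _ (by simpa [hr₂] using hr 1)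
  have hr₀₁ : r (0 + 1) = 0 := by rw [zero_add]; exact hr₁
  have : (s 0, α, (0 : S (0 + 1))) ∈ C 0 := by
    simpa [hr₀, hr₀₁, Function.update_of_ne zero_ne_one] using hr 0
  exact hProper₀ m (by simpa using (C 0).sub_mem hv this)

theorem trajT'_of_mem_trellisBehavior (hO : SpanTwoObservable C)
    (hCode : ∀ a : ZMod n → F, (∃ s, (a, s) ∈ trellisBehavior S (fun _ => F) C) ↔
      ∃ s t, trajT' S C S1' C0' C1' a s t)
    {ψ : S (0 + 1) → S1'} (hψ : ∀ m t, (m, t) ∈ linkingRelation (C 0) C0' → ψ m = t)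
    {a : ZMod n → F} {r : ∀ j, S j} (hr : (a, r) ∈ trellisBehavior S (fun _ => F) C) :
    trajT' S C S1' C0' C1' a r (ψ (r (0 + 1))) := by
  obtain ⟨s, t, hs⟩ := (hCode a).1 ⟨r, hr⟩
  rw [hψ _ _ (mem_linkingRelation_of_trajT' hO hr hs)]
  refine ⟨?_, ?_, fun j _ _ ↦ hr j⟩
  · rw [eq_of_mem_trellisBehavior_of_trajT' hO hr hs 0 zero_ne_one]; exact hs.1
  · rw [eq_of_mem_trellisBehavior_of_trajT' hO hr hs (1 + 1) (by simp)]; exact hs.2.1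

end Nontrivial

section BranchTrim

variable {ψ : S (0 + 1) → S1'}
  (htraj : ∀ a r, (a, r) ∈ trellisBehavior S (fun _ => F) C →
    trajT' S C S1' C0' C1' a r (ψ (r (0 + 1))))
include htraj

theorem mem_C0'_of_mem_C0
    (hB₀ : ∀ b ∈ C 0, ∃ p ∈ trellisBehavior S (fun _ => F) C, (p.2 0, p.1 0, p.2 (0 + 1)) = b)
    {x : S 0 × F × S (0 + 1)} (hx : x ∈ C 0) : (x.1, x.2.1, ψ x.2.2) ∈ C0' := by
  obtain ⟨⟨a, r⟩, hr, rfl⟩ := hB₀ x hx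
  exact (htraj a r hr).1

theorem mem_C1'_of_mem_C1
    (hB₁ : ∀ b ∈ C 1, ∃ p ∈ trellisBehavior S (fun _ => F) C, (p.2 1, p.1 1, p.2 (1 + 1)) = b)
    {y : S 1 × F × S (1 + 1)} (hy : y ∈ C 1) :
    (ψ (cast (congrArg S (zero_add (1 : ZMod n)).symm) y.1), y.2.1, y.2.2) ∈ C1' := by
  obtain ⟨⟨a, r⟩, hr, rfl⟩ := hB₁ y hy
  have hcast : cast (congrArg S (zero_add (1 : ZMod n)).symm) (r 1) = r (0 + 1) :=
    eq_of_heq ((cast_heq _ _).trans (congr_arg_heq r (zero_add 1).symm))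
  simpa [hcast] using (htraj a r hr).2.1

end BranchTrim

end Trellis

theorem locally_irreducible_general
    {F : Type*} [Field F] {n : ℕ} [NeZero n]
    (S : ZMod n → Type*)
    [∀ i, AddCommGroup (S i)] [∀ i, Module F (S i)] [∀ i, FiniteDimensional F (S i)]
    (C : ∀ i, Submodule F (S i × F × S (i + 1)))
    (S1' : Type*) [AddCommGroup S1'] [Module F S1'] [FiniteDimensional F S1']
    (C0' : Submodule F (S 0 × F × S1')) (C1' : Submodule F (S1' × F × S (1 + 1)))
    -- `T` is state-trim:
    (hStateTrim : ∀ (i : ZMod n) (u : S i),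
      ∃ p ∈ trellisBehavior S (fun _ => F) C, p.2 i = u)
    -- `T` is branch-trim:
    (hBranchTrim : ∀ (i : ZMod n), ∀ b ∈ C i,
      ∃ p ∈ trellisBehavior S (fun _ => F) C, (p.2 i, p.1 i, p.2 (i + 1)) = b)
    -- `T` is proper:
    (hProper : ∀ i : ZMod n,
      (∀ u : S i, (u, (0 : F), (0 : S (i + 1))) ∈ C i → u = 0) ∧
      (∀ v : S (i + 1), ((0 : S i), (0 : F), v) ∈ C i → v = 0))
    -- `T` is span-two-observable:
    (hS2O : ∀ (i : ZMod n) (s : ∀ j, S j),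
      (∀ j, j ≠ i - 2 → j ≠ i - 1 → (s j, (0 : F), s (j + 1)) ∈ C j) →
      ∀ j, j ≠ i - 1 → s j = 0)
    -- `T` is span-two-controllable:
    (hS2C : ∀ (i : ZMod n) (u : S i) (v : S (i - 2)),
      ∃ (s : ∀ j, S j) (a : ZMod n → F), s i = u ∧ s (i - 2) = v ∧
        ∀ j, j ≠ i - 2 → j ≠ i - 1 → (s j, a j, s (j + 1)) ∈ C j)
    -- the code `C` contains no nonzero codeword supported on an interval of length ≤ 2:
    (hCsupp : ∀ (i : ZMod n) (a : ZMod n → F),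
      (∃ s, (a, s) ∈ trellisBehavior S (fun _ => F) C) →
      (∀ j, j ≠ i → j ≠ i + 1 → a j = 0) → a = 0)
    -- the dual code `C^⊥` contains no nonzero codeword supported on an interval of length ≤ 2:
    (hCdualsupp : ∀ (i : ZMod n) (b : ZMod n → F),
      (∀ a : ZMod n → F, (∃ s, (a, s) ∈ trellisBehavior S (fun _ => F) C) →
        ∑ j, a j * b j = 0) →
      (∀ j, j ≠ i → j ≠ i + 1 → b j = 0) → b = 0)
    -- `T'` is trim at state time `1` and state-trim:
    (hTrim' : ∀ t : S1', ∃ a s, trajT' S C S1' C0' C1' a s t)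
    -- `T'` realizes the same code as `T`:
    (hCode : ∀ a : ZMod n → F,
      (∃ s, (a, s) ∈ trellisBehavior S (fun _ => F) C) ↔
        (∃ s t, trajT' S C S1' C0' C1' a s t))
    -- the dimensions of `T'` do not exceed those of `T`:
    (hdimS : finrank F S1' ≤ finrank F (S (0 + 1)))
    (hdimC0 : finrank F ↥C0' ≤ finrank F ↥(C 0))
    (hdimC1 : finrank F ↥C1' ≤ finrank F ↥(C 1)) :
    ∃ ψ : S (0 + 1) ≃ₗ[F] S1',
      (∀ z : S 0 × F × S1', z ∈ C0' ↔ ∃ x ∈ C 0, z = (x.1, x.2.1, ψ x.2.2)) ∧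
      (∀ z : S1' × F × S (1 + 1), z ∈ C1' ↔ ∃ y ∈ C 1,
        z = (ψ (cast (congrArg S (zero_add (1 : ZMod n)).symm) y.1), y.2.1, y.2.2)) ∧
      finrank F S1' = finrank F (S (0 + 1)) := by
  have : Nontrivial (ZMod n) :=
    nontrivial_of_no_short_support _ 0 (0 + 1) (hCsupp 0) (hCdualsupp 0)
  have hfst : ∀ m, ∃ t, (m, t) ∈ linkingRelation (C 0) C0' := fun m ↦ by
    obtain ⟨⟨a, r⟩, hr, rfl⟩ := hStateTrim (0 + 1) m
    obtain ⟨s, t, hs⟩ := (hCode a).1 ⟨r, hr⟩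
    exact ⟨t, mem_linkingRelation_of_trajT' hS2O hr hs⟩
  have hsnd : ∀ t, ∃ m, (m, t) ∈ linkingRelation (C 0) C0' := fun t ↦ by
    obtain ⟨a, s, hs⟩ := hTrim' t
    obtain ⟨r, hr⟩ := (hCode a).2 ⟨s, t, hs⟩
    exact ⟨r (0 + 1), mem_linkingRelation_of_trajT' hS2O hr hs⟩
  obtain ⟨ψ, hψ⟩ := (linkingRelation (C 0) C0').exists_linearEquiv_of_graph hfst hsnd
    (fun _ ↦ eq_zero_of_mem_linkingRelation hS2O hS2C hCode (hProper 0).2 (hProper 1).1) hdimS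
  have htraj := fun a r ↦ trajT'_of_mem_trellisBehavior (a := a) (r := r) hS2O hCode hψ
  have hC0 := Submodule.map_equiv_eq_of_le_of_finrank_le
    ((LinearEquiv.refl F (S 0)).prodCongr ((LinearEquiv.refl F F).prodCongr ψ))
    (Submodule.map_le_iff_le_comap.2 fun _ ↦ mem_C0'_of_mem_C0 htraj (hBranchTrim 0)) hdimC0
  have hC1 := Submodule.map_equiv_eq_of_le_of_finrank_le
    (((LinearEquiv.cast (zero_add (1 : ZMod n)).symm).trans ψ).prodCongr
      (LinearEquiv.refl F (F × S (1 + 1))))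
    (Submodule.map_le_iff_le_comap.2 fun _ ↦ mem_C1'_of_mem_C1 htraj (hBranchTrim 1)) hdimC1
  refine ⟨ψ, fun z ↦ ?_, fun z ↦ ?_, ψ.symm.finrank_eq⟩
  · rw [← hC0]
    simp [eq_comm]
  · rw [← hC1]
    simp [eq_comm]

/-- Local irreducibility: let `T` be a state-trim, branch-trim, proper, span-two-observable
and span-two-controllable tail-biting trellis of length `n` (symbol spaces `= F`), realizing
a code `C ⊆ Fⁿ` such that neither `C` nor `C^⊥` contains a nonzero codeword supported on a
cyclic interval of length at most `2`. Let `T'` be a proper and trim realization of the same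
code differing from `T` only at state time `1`, with `dim S1' ≤ dim S₁`, `dim C0' ≤ dim C₀`
and `dim C1' ≤ dim C₁`. If `T'` is also observable, then there is a linear isomorphism
`ψ : S₁ ≃ S1'` with `C0' = {(s₀,a₀,ψ s₁) : (s₀,a₀,s₁) ∈ C₀}` and
`C1' = {(ψ s₁,a₁,s₂) : (s₁,a₁,s₂) ∈ C₁}`; in particular `dim S1' = dim S₁` and `T'` is
isomorphic to `T`. -/
theorem locally_irreducible
    {F : Type*} [Field F] [Fintype F] {n : ℕ} [NeZero n]
    (S : ZMod n → Type*)
    [∀ i, AddCommGroup (S i)] [∀ i, Module F (S i)] [∀ i, FiniteDimensional F (S i)]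
    (C : ∀ i, Submodule F (S i × F × S (i + 1)))
    (S1' : Type*) [AddCommGroup S1'] [Module F S1'] [FiniteDimensional F S1']
    (C0' : Submodule F (S 0 × F × S1')) (C1' : Submodule F (S1' × F × S (1 + 1)))
    -- `T` is state-trim:
    (hStateTrim : ∀ (i : ZMod n) (u : S i),
      ∃ p ∈ trellisBehavior S (fun _ => F) C, p.2 i = u)
    -- `T` is branch-trim:
    (hBranchTrim : ∀ (i : ZMod n), ∀ b ∈ C i,
      ∃ p ∈ trellisBehavior S (fun _ => F) C, (p.2 i, p.1 i, p.2 (i + 1)) = b)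
    -- `T` is proper:
    (hProper : ∀ i : ZMod n,
      (∀ u : S i, (u, (0 : F), (0 : S (i + 1))) ∈ C i → u = 0) ∧
      (∀ v : S (i + 1), ((0 : S i), (0 : F), v) ∈ C i → v = 0))
    -- `T` is span-two-observable:
    (hS2O : ∀ (i : ZMod n) (s : ∀ j, S j),
      (∀ j, j ≠ i - 2 → j ≠ i - 1 → (s j, (0 : F), s (j + 1)) ∈ C j) →
      ∀ j, j ≠ i - 1 → s j = 0)
    -- `T` is span-two-controllable:
    (hS2C : ∀ (i : ZMod n) (u : S i) (v : S (i - 2)),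
      ∃ (s : ∀ j, S j) (a : ZMod n → F), s i = u ∧ s (i - 2) = v ∧
        ∀ j, j ≠ i - 2 → j ≠ i - 1 → (s j, a j, s (j + 1)) ∈ C j)
    -- the code `C` contains no nonzero codeword supported on an interval of length ≤ 2:
    (hCsupp : ∀ (i : ZMod n) (a : ZMod n → F),
      (∃ s, (a, s) ∈ trellisBehavior S (fun _ => F) C) →
      (∀ j, j ≠ i → j ≠ i + 1 → a j = 0) → a = 0)
    -- the dual code `C^⊥` contains no nonzero codeword supported on an interval of length ≤ 2:
    (hCdualsupp : ∀ (i : ZMod n) (b : ZMod n → F),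
      (∀ a : ZMod n → F, (∃ s, (a, s) ∈ trellisBehavior S (fun _ => F) C) →
        ∑ j, a j * b j = 0) →
      (∀ j, j ≠ i → j ≠ i + 1 → b j = 0) → b = 0)
    -- `T'` is trim at state time `1` and state-trim:
    (hTrim' : ∀ t : S1', ∃ a s, trajT' S C S1' C0' C1' a s t)
    (hStateTrim' : ∀ (j : ZMod n) (u : S j),
      ∃ a s t, trajT' S C S1' C0' C1' a s t ∧ s j = u)
    -- `T'` is proper at state time `1`:
    (hProper' : (∀ u : S 0, (u, (0 : F), (0 : S1')) ∈ C0' → u = 0) ∧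
      (∀ t : S1', ((0 : S 0), (0 : F), t) ∈ C0' → t = 0) ∧
      (∀ t : S1', (t, (0 : F), (0 : S (1 + 1))) ∈ C1' → t = 0) ∧
      (∀ v : S (1 + 1), ((0 : S1'), (0 : F), v) ∈ C1' → v = 0))
    -- `T'` realizes the same code as `T`:
    (hCode : ∀ a : ZMod n → F,
      (∃ s, (a, s) ∈ trellisBehavior S (fun _ => F) C) ↔
        (∃ s t, trajT' S C S1' C0' C1' a s t))
    -- the dimensions of `T'` do not exceed those of `T`:
    (hdimS : finrank F S1' ≤ finrank F (S (0 + 1)))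
    (hdimC0 : finrank F ↥C0' ≤ finrank F ↥(C 0))
    (hdimC1 : finrank F ↥C1' ≤ finrank F ↥(C 1))
    -- `T'` is observable:
    (hObs' : ∀ (a : ZMod n → F) (s : ∀ j, S j) (t : S1') (s' : ∀ j, S j) (t' : S1'),
      trajT' S C S1' C0' C1' a s t → trajT' S C S1' C0' C1' a s' t' →
      t = t' ∧ ∀ j, j ≠ 1 → s j = s' j) :
    ∃ ψ : S (0 + 1) ≃ₗ[F] S1',
      (∀ z : S 0 × F × S1', z ∈ C0' ↔ ∃ x ∈ C 0, z = (x.1, x.2.1, ψ x.2.2)) ∧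
      (∀ z : S1' × F × S (1 + 1), z ∈ C1' ↔ ∃ y ∈ C 1,
        z = (ψ (cast (congrArg S (zero_add (1 : ZMod n)).symm) y.1), y.2.1, y.2.2)) ∧
      finrank F S1' = finrank F (S (0 + 1)) :=
  locally_irreducible_general S C S1' C0' C1' hStateTrim hBranchTrim hProper hS2O hS2C hCsupp
    hCdualsupp hTrim' hCode hdimS hdimC0 hdimC1
end
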